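/- arXiv:2407.14659 — 5 statements merged into one kernel-verified Lean document; each statement's English description precedes it below -/
import Mathlib

section
/- Let A be a commutative ℂ-algebra, D_Y : A → A a ℂ-linear derivation, and V a ℂ-vector subspace of ℂ-linear derivations A → A that is normalised by D_Y (i.e., for every D_W ∈ V, the commutator [D_W, D_Y] lies in V). Let I be the ideal of A generated by the union of the images of all derivations in V. Then D_Y maps the radical √I into √I. -/
/-- Dividing by a nonzero natural number inside an ideal of a `ℂ`-algebra. -/
lemma nsmul_mem_ideal_cancel {A : Type} [CommRing A] [Algebra ℂ A]
    (I : Ideal A) {m : ℕ} (hm : m ≠ 0) {y : A} (h : m • y ∈ I) : y ∈ I := by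
  have h2 := I.mul_mem_left (algebraMap ℂ A ((m : ℂ)⁻¹)) h
  have : algebraMap ℂ A ((m : ℂ)⁻¹) * (m • y) = y := by
    rw [nsmul_eq_mul, ← mul_assoc]
    have : (m : A) = algebraMap ℂ A (m : ℂ) := by
      simp
    rw [this, ← map_mul]
    rw [inv_mul_cancel₀ (by exact_mod_cast hm)]
    simp
  rwa [this] at h2

/-- A derivation preserving an ideal preserves its radical (char 0 divisions). -/
lemma derivation_radical {A : Type} [CommRing A] [Algebra ℂ A]
    (D : Derivation ℂ A A) (I : Ideal A) (hD : ∀ a ∈ I, D a ∈ I) :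
    ∀ x ∈ I.radical, D x ∈ I.radical := by
  intro x hx
  obtain ⟨n, hn⟩ := hx
  -- key claim : for all k ≤ n, x^(n-k) * (D x)^(2k) ∈ I
  have key : ∀ k, k ≤ n → x ^ (n - k) * (D x) ^ (2 * k) ∈ I := by
    intro k
    induction k with
    | zero => intro _; simpa using hn
    | succ k ih =>
      intro hk1
      have hk : k < n := hk1
      have hP := ih hk.le
      set e := n - (k + 1) with he
      have hnk : n - k = e + 1 := by omega
      rw [hnk] at hP
      -- D of the member, times D x, is in I
      have h1 : D (x ^ (e + 1) * (D x) ^ (2 * k)) ∈ I := hD _ hP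
      have h2 : D (x ^ (e + 1) * (D x) ^ (2 * k)) * D x ∈ I := I.mul_mem_right _ h1
      -- the "second derivative" term is in I
      have hT1 : x ^ (e + 1) * D ((D x) ^ (2 * k)) * D x ∈ I := by
        rcases Nat.eq_zero_or_pos k with hk0 | hk0
        · subst hk0; simp
        · have : x ^ (e + 1) * D ((D x) ^ (2 * k)) * D x
              = (2 * k) • ((x ^ (e + 1) * (D x) ^ (2 * k)) * D (D x)) := by
            rw [Derivation.leibniz_pow]
            have h2k : 2 * k - 1 + 1 = 2 * k := by omega
            simp only [smul_eq_mul, nsmul_eq_mul]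
            rw [← h2k, pow_succ]
            push_cast
            ring
          rw [this, nsmul_eq_mul]
          exact I.mul_mem_left _ (I.mul_mem_right _ hP)
      have h3 : D (x ^ (e + 1) * (D x) ^ (2 * k)) * D x
          = x ^ (e + 1) * D ((D x) ^ (2 * k)) * D x
            + (e + 1) • (x ^ e * (D x) ^ (2 * (k + 1))) := by
        rw [Derivation.leibniz, Derivation.leibniz_pow, Derivation.leibniz_pow]
        simp only [smul_eq_mul, nsmul_eq_mul, Nat.add_sub_cancel]
        push_cast
        ring
      have h4 : (e + 1) • (x ^ e * (D x) ^ (2 * (k + 1))) ∈ I := by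
        have := I.sub_mem h2 hT1
        rw [h3] at this
        simpa using this
      exact nsmul_mem_ideal_cancel I (by omega) h4
  have := key n le_rfl
  simp only [Nat.sub_self, pow_zero, one_mul] at this
  exact ⟨2 * n, this⟩

/-- **Derivations preserve the radical of the ideal generated by a normalised
space of derivations.**
Let `A` be a commutative `ℂ`-algebra, `DY : A → A` a `ℂ`-linear derivation, and
`V` a `ℂ`-vector subspace of the derivations of `A` normalised by `DY` (i.e.
`⁅D, DY⁆ ∈ V` for all `D ∈ V`).  Let `I` be the ideal generated by the images of
all derivations in `V`.  Then `DY` maps `√I` into `√I`. -/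
theorem stmt_3 {A : Type} [CommRing A] [Algebra ℂ A]
    (DY : Derivation ℂ A A) (V : Submodule ℂ (Derivation ℂ A A))
    (hnorm : ∀ D ∈ V, ⁅D, DY⁆ ∈ V) :
    ∀ x ∈ (Ideal.span (⋃ D ∈ V, Set.range (D : A → A))).radical,
      DY x ∈ (Ideal.span (⋃ D ∈ V, Set.range (D : A → A))).radical := by
  set S : Set A := ⋃ D ∈ V, Set.range (D : A → A) with hS
  set I : Ideal A := Ideal.span S with hI
  have hSI : ∀ D ∈ V, ∀ a, (D : Derivation ℂ A A) a ∈ I := by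
    intro D hD a
    apply Ideal.subset_span
    exact Set.mem_iUnion₂.2 ⟨D, hD, ⟨a, rfl⟩⟩
  have hDYI : ∀ a ∈ I, DY a ∈ I := by
    intro a ha
    refine Submodule.span_induction ?_ ?_ ?_ ?_ ha
    · rintro x hx
      obtain ⟨_, ⟨D, rfl⟩, _, ⟨hD, rfl⟩, b, rfl⟩ := hx
      have : DY (D b) = D (DY b) - ⁅D, DY⁆ b := by
        rw [Derivation.commutator_apply]; ring
      rw [this]
      exact I.sub_mem (hSI D hD _) (hSI _ (hnorm D hD) _)
    · simp
    · intro u v _ _ hu hv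
      rw [map_add]; exact I.add_mem hu hv
    · intro a u hx hu
      rw [smul_eq_mul, Derivation.leibniz, smul_eq_mul, smul_eq_mul]
      exact I.add_mem (I.mul_mem_left _ hu) (I.mul_mem_right _ hx)
  exact derivation_radical DY I hDYI
end

section
/- Let H be a connected solvable linear algebraic group over ℂ with maximal torus T of dimension r, and write h = t ⊕ h_n where h_n is the nilpotent part of the Lie algebra. For v ∈ h, v is regular (i.e., dim C_h(v) = r) if and only if [v, h] = h_n. -/
/-- **Regularity in solvable Lie algebras.**
Let `h = t ⊕ hn` be the Lie algebra of a connected solvable complex linear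
algebraic group, where `t` is the Lie algebra of a maximal torus of dimension
`r` and `hn` (the nilpotent part) is an ideal containing all brackets.  For
`v ∈ h`, `v` is regular (i.e. its centraliser `ker (ad v)` has dimension `r`)
if and only if `⁅v, h⁆ = hn`, i.e. the range of `ad v` is `hn`. -/
theorem stmt_7 {L : Type} [LieRing L] [LieAlgebra ℂ L] [FiniteDimensional ℂ L]
    (t hn : Submodule ℂ L) (hcompl : IsCompl t hn)
    (hbrack : ∀ x y : L, ⁅x, y⁆ ∈ hn)
    (v : L) :
    Module.finrank ℂ (LinearMap.ker (LieAlgebra.ad ℂ L v)) = Module.finrank ℂ t ↔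
      LinearMap.range (LieAlgebra.ad ℂ L v) = hn := by
  have hle : LinearMap.range ((LieAlgebra.ad ℂ L v : L →ₗ[ℂ] L)) ≤ hn := by
    rintro x ⟨y, rfl⟩; exact hbrack v y
  have hrn := LinearMap.finrank_range_add_finrank_ker (LieAlgebra.ad ℂ L v : L →ₗ[ℂ] L)
  have hsum := Submodule.finrank_add_eq_of_isCompl hcompl
  have hmono := Submodule.finrank_mono hle
  constructor
  · intro h
    exact Submodule.eq_of_le_of_finrank_le hle (by omega)
  · intro h
    rw [h] at hrn
    omega
end

section
/- Let H be a connected solvable complex linear algebraic group with a principal integrable b(sl₂)-pair (e,h), where h integrates to a one-parameter subgroup H^t satisfying Ad_{H^t}(e) = t²e. Then every element of the affine subspace e + t (with t = Lie of the maximal torus containing h) is a regular element of h = Lie(H), and no two distinct elements of e + t are conjugate under H. -/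
/-!
The centraliser of any `y` is the kernel of `ad y`, whose range lies in `hn`; hence its dimension
is at least `dim t`. Conversely, the one-parameter subgroup conjugates `e + w` (`w ∈ t`) to
`c • e + w` for every `c ≠ 0`, and for all but finitely many `c` the kernel of
`c • ad e + ad w` is no larger than that of `ad e`, which has dimension `dim t` by regularity
of `e`. For conjugacy, `Ad g x - x ∈ hn` while two elements of `e + t` differ by an element
of `t`, and `t ∩ hn = 0`.
-/

open Module LinearMap Filter

section LinearAlgebra

variable {K V W : Type*} [Field K] [AddCommGroup V] [Module K V] [AddCommGroup W] [Module K W]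

theorem Module.End.eventually_injective_smul_id_add [FiniteDimensional K V] (f : End K V) :
    ∀ᶠ c : K in cofinite, Function.Injective (c • (LinearMap.id : End K V) + f) := by
  refine eventually_cofinite.mpr ((f.finite_hasEigenvalue.preimage neg_injective.injOn).subset ?_)
  intro c hc
  obtain ⟨x, hx, hx0⟩ : ∃ x, c • x + f x = 0 ∧ x ≠ 0 := by
    simpa [injective_iff_map_eq_zero] using hc
  refine Module.End.hasEigenvalue_of_hasEigenvector (x := x) ⟨?_, hx0⟩
  rw [Module.End.mem_eigenspace_iff, neg_smul]
  exact eq_neg_of_add_eq_zero_right hx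

theorem eventually_finrank_ker_smul_add_le [FiniteDimensional K V] (A B : V →ₗ[K] W) :
    ∀ᶠ c : K in cofinite, finrank K (ker (c • A + B)) ≤ finrank K (ker A) := by
  obtain ⟨C, hC⟩ := (ker A).exists_isCompl
  have hAC : ker (A.domRestrict C) = ⊥ :=
    ker_eq_bot.mpr (injective_domRestrict_iff.mpr hC.disjoint.symm)
  obtain ⟨P, hP⟩ := (A.domRestrict C).exists_leftInverse_of_injective hAC
  filter_upwards [Module.End.eventually_injective_smul_id_add (P ∘ₗ B.domRestrict C)] with c hc
  -- `P` inverts `A` on `C`, so it turns `(c • A + B)|_C` into `c • id + P ∘ B|_C`.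
  have hcomp : P ∘ₗ (c • A + B).domRestrict C = c • LinearMap.id + P ∘ₗ B.domRestrict C := by
    rw [← hP]
    ext x
    simp
  have hdisj : Disjoint C (ker (c • A + B)) :=
    injective_domRestrict_iff.mp <| Function.Injective.of_comp (f := P) <| by
      rw [← LinearMap.coe_comp, hcomp]
      exact hc
  have := Submodule.finrank_add_finrank_le_of_disjoint hdisj
  have := Submodule.finrank_add_eq_of_isCompl hC
  omega

theorem finrank_le_finrank_ker_of_range_le {f : End K V} {p q : Submodule K V}
    [FiniteDimensional K V] (hpq : IsCompl q p) (hf : range f ≤ p) :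
    finrank K q ≤ finrank K (ker f) := by
  have := Submodule.finrank_mono hf
  have := f.finrank_range_add_finrank_ker
  have := Submodule.finrank_add_eq_of_isCompl hpq
  omega

theorem LinearEquiv.finrank_ker_conj (e : V ≃ₗ[K] W) (f : End K V) :
    finrank K (ker (e.conj f)) = finrank K (ker f) := by
  rw [LinearEquiv.conj_apply, LinearMap.ker_comp, LinearEquiv.ker_comp,
    Submodule.comap_equiv_eq_map_symm, LinearEquiv.symm_symm, LinearEquiv.finrank_map_eq]

end LinearAlgebra

section LieAlgebra

variable {K L : Type*} [Field K] [LieRing L] [LieAlgebra K L]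

theorem finrank_ker_ad_lieEquiv (φ : L ≃ₗ⁅K⁆ L) (x : L) :
    finrank K (ker (LieAlgebra.ad K L (φ x))) = finrank K (ker (LieAlgebra.ad K L x)) := by
  rw [← LieAlgebra.conj_ad_apply, LinearEquiv.finrank_ker_conj]

theorem finrank_le_finrank_ker_ad [FiniteDimensional K L] {t n : Submodule K L}
    (htn : IsCompl t n) (hbrack : ∀ x y : L, ⁅x, y⁆ ∈ n) (y : L) :
    finrank K t ≤ finrank K (ker (LieAlgebra.ad K L y)) :=
  finrank_le_finrank_ker_of_range_le htn (by rintro - ⟨x, rfl⟩; exact hbrack y x)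

theorem eventually_finrank_ker_ad_smul_add_le [FiniteDimensional K L] (e w : L) :
    ∀ᶠ c : K in cofinite,
      finrank K (ker (LieAlgebra.ad K L (c • e + w))) ≤ finrank K (ker (LieAlgebra.ad K L e)) :=
  (eventually_finrank_ker_smul_add_le (LieAlgebra.ad K L e) (LieAlgebra.ad K L w)).mono
    fun c hc => by rwa [map_add, map_smul]

end LieAlgebra

theorem stmt_8_general {L : Type} [LieRing L] [LieAlgebra ℂ L] [FiniteDimensional ℂ L]
    (t hn : Submodule ℂ L) (hcompl : IsCompl t hn)
    (hbrack : ∀ x y : L, ⁅x, y⁆ ∈ hn)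
    {G : Type} [Group G] (Ad : G →* (L ≃ₗ[ℂ] L))
    (hAdLie : ∀ g : G, ∀ x y : L, Ad g ⁅x, y⁆ = ⁅Ad g x, Ad g y⁆)
    (hAdn : ∀ g : G, ∀ x : L, Ad g x - x ∈ hn)
    (e : L)
    (hereg : Module.finrank ℂ (LinearMap.ker (LieAlgebra.ad ℂ L e)) = Module.finrank ℂ t)
    (H : ℂˣ → G)
    (hHe : ∀ s : ℂˣ, Ad (H s) e = ((s : ℂ) ^ 2) • e)
    (hHt : ∀ s : ℂˣ, ∀ w ∈ t, Ad (H s) w = w) :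
    (∀ w ∈ t,
      Module.finrank ℂ (LinearMap.ker (LieAlgebra.ad ℂ L (e + w))) = Module.finrank ℂ t) ∧
    (∀ w ∈ t, ∀ w' ∈ t, (∃ g : G, Ad g (e + w) = e + w') → w = w') := by
  let AdLie (g : G) : L ≃ₗ⁅ℂ⁆ L := { Ad g with map_lie' := hAdLie g _ _ }
  refine ⟨fun w hw => ?_, fun w hw w' hw' ⟨g, hg⟩ => ?_⟩
  · obtain ⟨c, hc, hc0⟩ :=
      ((eventually_finrank_ker_ad_smul_add_le (K := ℂ) e w).and (eventually_cofinite_ne 0)).exists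
    obtain ⟨s, rfl⟩ := IsAlgClosed.exists_pow_nat_eq c two_pos
    have hs0 : s ≠ 0 := by rintro rfl; simp at hc0
    have hconj : AdLie (H (Units.mk0 s hs0)) (e + w) = s ^ 2 • e + w := by
      change Ad _ (e + w) = _
      rw [map_add, hHe, hHt _ w hw, Units.val_mk0]
    refine le_antisymm ?_ (finrank_le_finrank_ker_ad hcompl hbrack _)
    rw [← finrank_ker_ad_lieEquiv (AdLie (H (Units.mk0 s hs0))), hconj, ← hereg]
    exact hc
  · have hdiff : w' - w ∈ t ⊓ hn := ⟨t.sub_mem hw' hw, by simpa [hg] using hAdn g (e + w)⟩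
    rw [hcompl.inf_eq_bot, Submodule.mem_bot, sub_eq_zero] at hdiff
    exact hdiff.symm

/-- **Elements of `e + t` are regular and pairwise non-conjugate.**
Let `H` be a connected solvable complex linear algebraic group with Lie algebra
`L = t ⊕ hn` (`t` the Lie algebra of the maximal torus, `hn` the nilpotent part,
an ideal containing all brackets), acting on `L` by the adjoint representation
`Ad` (a group homomorphism into Lie algebra automorphisms with
`Ad g x - x ∈ hn` for all `g`).  Let `(e, h)` be a principal integrable
`𝔟(𝔰𝔩₂)`-pair: `e ∈ hn` is a regular nilpotent and `h` integrates to a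
one-parameter subgroup `H s` with `Ad (H s) e = s² • e`, fixing `t` pointwise.
Then every element of `e + t` is regular in `L` (its centraliser has dimension
`dim t`), and no two distinct elements of `e + t` are conjugate under `H`. -/
theorem stmt_8 {L : Type} [LieRing L] [LieAlgebra ℂ L] [FiniteDimensional ℂ L]
    (t hn : Submodule ℂ L) (hcompl : IsCompl t hn)
    (hbrack : ∀ x y : L, ⁅x, y⁆ ∈ hn)
    {G : Type} [Group G] (Ad : G →* (L ≃ₗ[ℂ] L))
    (hAdLie : ∀ g : G, ∀ x y : L, Ad g ⁅x, y⁆ = ⁅Ad g x, Ad g y⁆)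
    (hAdn : ∀ g : G, ∀ x : L, Ad g x - x ∈ hn)
    (e : L) (he : e ∈ hn)
    (hereg : Module.finrank ℂ (LinearMap.ker (LieAlgebra.ad ℂ L e)) = Module.finrank ℂ t)
    (H : ℂˣ → G) (hHmul : ∀ s s' : ℂˣ, H (s * s') = H s * H s')
    (hHe : ∀ s : ℂˣ, Ad (H s) e = ((s : ℂ) ^ 2) • e)
    (hHt : ∀ s : ℂˣ, ∀ w ∈ t, Ad (H s) w = w) :
    (∀ w ∈ t,
      Module.finrank ℂ (LinearMap.ker (LieAlgebra.ad ℂ L (e + w))) = Module.finrank ℂ t) ∧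
    (∀ w ∈ t, ∀ w' ∈ t, (∃ g : G, Ad g (e + w) = e + w') → w = w') :=
  stmt_8_general t hn hcompl hbrack Ad hAdLie hAdn e hereg H hHe hHt
end

section
/- Let H be a connected solvable complex algebraic group with maximal torus T and Lie algebra decomposition h = t ⊕ h_n. Every element x = w + n with w ∈ t and n ∈ h_n is conjugate under H to an element w + n' with n' ∈ h_n nilpotent and [w, n'] = 0; moreover the t-component w is preserved. -/
/-- **Generalised Jordan form in solvable groups.**
Let `H` be a connected solvable complex algebraic group with Lie algebra
`L = t ⊕ hn` (`t` from a maximal torus, `hn` the nilpotent ideal containing all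
brackets) and adjoint action `Ad` by Lie algebra automorphisms with
`Ad g x - x ∈ hn`.  Assume the Jordan decomposition in `H`: every `x ∈ L`
splits as `x = s + n'` with `⁅s, n'⁆ = 0`, `n' ∈ hn` nilpotent, and `s`
(semisimple) conjugate into `t`.  Then every element `x = w + n` with `w ∈ t`,
`n ∈ hn` is conjugate under `H` to an element `w + n'` with `n' ∈ hn` and
`⁅w, n'⁆ = 0`; in particular the `t`-component `w` is preserved. -/
theorem stmt_10 {L : Type} [LieRing L] [LieAlgebra ℂ L] [FiniteDimensional ℂ L]
    (t hn : Submodule ℂ L) (hcompl : IsCompl t hn)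
    (hbrack : ∀ x y : L, ⁅x, y⁆ ∈ hn)
    {G : Type} [Group G] (Ad : G →* (L ≃ₗ[ℂ] L))
    (hAdLie : ∀ g : G, ∀ x y : L, Ad g ⁅x, y⁆ = ⁅Ad g x, Ad g y⁆)
    (hAdn : ∀ g : G, ∀ x : L, Ad g x - x ∈ hn)
    (hJordan : ∀ x : L, ∃ s n' : L,
      x = s + n' ∧ ⁅s, n'⁆ = 0 ∧ n' ∈ hn ∧ ∃ g : G, Ad g s ∈ t) :
    ∀ w ∈ t, ∀ n ∈ hn,
      ∃ g : G, ∃ n' ∈ hn, ⁅w, n'⁆ = 0 ∧ Ad g (w + n') = w + n := by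
  intro w hw n hnn
  obtain ⟨s, n₁, hx, hb, hn₁, g, hgs⟩ := hJordan (w + n)
  have hgn₁ : Ad g n₁ ∈ hn := by
    have := hAdn g n₁
    have : Ad g n₁ = (Ad g n₁ - n₁) + n₁ := by abel
    rw [this]; exact hn.add_mem (hAdn g n₁) hn₁
  have hAdx : Ad g (w + n) = Ad g s + Ad g n₁ := by
    rw [hx, map_add]
  have hsw : Ad g s = w := by
    have hdiff : Ad g s - w ∈ hn := by
      have h1 : Ad g s - w = (Ad g (w + n) - (w + n)) - Ad g n₁ + n := by
        rw [hAdx]; abel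
      rw [h1]
      exact hn.add_mem (hn.sub_mem (hAdn g (w + n)) hgn₁) hnn
    have hdt : Ad g s - w ∈ t := t.sub_mem hgs hw
    have : Ad g s - w ∈ t ⊓ hn := ⟨hdt, hdiff⟩
    rw [hcompl.inf_eq_bot] at this
    have := (Submodule.mem_bot ℂ).mp this
    exact sub_eq_zero.mp this
  refine ⟨g⁻¹, Ad g n₁, hgn₁, ?_, ?_⟩
  · rw [← hsw, ← hAdLie, hb, map_zero]
  · have : Ad g (w + n) = w + Ad g n₁ := by rw [hAdx, hsw]
    rw [← this, map_inv]
    exact (Ad g).symm_apply_apply _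
end

section
/- Let Y be a reduced scheme of finite type over a field k and Z a closed subvariety. If every closed point p ∈ Y is contained in a closed projective (complete) subvariety of Y that intersects Z, then the restriction map on global regular functions k[Y] → k[Z] is injective. -/
/-!
Let `f` be a global function on `Y` vanishing on `Z`. Since `Y` is reduced and Jacobson,
it suffices to see that `f` vanishes at every closed point `p`. Take a complete integral
subvariety `P ∋ p` meeting `Z`. Properness makes the global functions on `P` a field, so the restriction
of `f` to `P`, which vanishes at a point of `P ∩ Z`, is zero; in particular `f(p) = 0`.
-/

open AlgebraicGeometry CategoryTheory

namespace AlgebraicGeometry.Scheme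

lemma mem_basicOpen_appTop_iff {X Y : Scheme} (φ : X ⟶ Y) (f : Γ(Y, ⊤)) (x : X) :
    x ∈ X.basicOpen (φ.appTop f) ↔ φ.base x ∈ Y.basicOpen f := by
  rw [← preimage_basicOpen_top]
  rfl

lemma eq_zero_of_notMem_basicOpen_of_universallyClosed {k : Type*} [Field k] {P : Scheme}
    [IsIntegral P] (π : P ⟶ Spec (.of k)) [UniversallyClosed π] {g : Γ(P, ⊤)} {q : P}
    (hq : q ∉ P.basicOpen g) : g = 0 := by
  let := (isField_of_universallyClosed k π).toField
  by_contra hg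
  exact hq (by simp [basicOpen_of_isUnit _ (Ne.isUnit hg)])

lemma eq_zero_of_forall_isClosed_notMem_basicOpen {X : Scheme} [IsReduced X] [JacobsonSpace X]
    {f : Γ(X, ⊤)} (hf : ∀ p : X, IsClosed ({p} : Set X) → p ∉ X.basicOpen f) : f = 0 := by
  refine eq_zero_of_basicOpen_eq_bot f (TopologicalSpace.Opens.coe_eq_empty.mp ?_)
  by_contra hne
  obtain ⟨p, hpf, hp⟩ := nonempty_inter_closedPoints (Set.nonempty_iff_ne_empty.mpr hne)
    (X.basicOpen f).isOpen.isLocallyClosed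
  exact hf p hp hpf

end AlgebraicGeometry.Scheme

theorem stmt_19_general (k : Type) [Field k]
    (Y Z : Scheme) (sY : Y ⟶ Spec (CommRingCat.of k))
    [IsReduced Y] [LocallyOfFiniteType sY]
    (ι : Z ⟶ Y)
    (hcover : ∀ p : Y, IsClosed ({p} : Set Y) →
      ∃ (P : Scheme) (j : P ⟶ Y), IsClosedImmersion j ∧ IsIntegral P ∧
        IsProper (j ≫ sY) ∧ p ∈ Set.range j.base ∧
        (Set.range j.base ∩ Set.range ι.base).Nonempty) :
    Function.Injective (Scheme.Γ.map ι.op) := by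
  have : JacobsonSpace Y := LocallyOfFiniteType.jacobsonSpace sY
  refine (injective_iff_map_eq_zero _).mpr fun (f : Γ(Y, ⊤)) hf ↦
    Scheme.eq_zero_of_forall_isClosed_notMem_basicOpen fun p hp hpf ↦ ?_
  obtain ⟨P, j, -, _, _, ⟨q, rfl⟩, _, ⟨q₀, hq₀⟩, ⟨z, hz⟩⟩ := hcover p hp
  have hf : ι.appTop f = 0 := hf
  have hq₀ : q₀ ∉ P.basicOpen (j.appTop f) := by
    rw [Scheme.mem_basicOpen_appTop_iff, hq₀, ← hz, ← Scheme.mem_basicOpen_appTop_iff, hf,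
      Scheme.basicOpen_zero]
    simp
  have hjf : j.appTop f = 0 :=
    Scheme.eq_zero_of_notMem_basicOpen_of_universallyClosed (j ≫ sY) hq₀
  simp [← Scheme.mem_basicOpen_appTop_iff, hjf] at hpf

/-- **Functions are determined on a subvariety met by complete subvarieties.**
Let `Y` be a reduced scheme of finite type over a field `k` and `ι : Z ⟶ Y` a
closed subvariety.  If every closed point `p ∈ Y` is contained in a closed
projective (complete, integral) subvariety of `Y` that intersects `Z`, then the
restriction map on global regular functions `k[Y] → k[Z]` is injective. -/
theorem stmt_19 (k : Type) [Field k]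
    (Y Z : Scheme) (sY : Y ⟶ Spec (CommRingCat.of k))
    [IsReduced Y] [LocallyOfFiniteType sY] [CompactSpace Y]
    (ι : Z ⟶ Y) [IsClosedImmersion ι]
    (hcover : ∀ p : Y, IsClosed ({p} : Set Y) →
      ∃ (P : Scheme) (j : P ⟶ Y), IsClosedImmersion j ∧ IsIntegral P ∧
        IsProper (j ≫ sY) ∧ p ∈ Set.range j.base ∧
        (Set.range j.base ∩ Set.range ι.base).Nonempty) :
    Function.Injective (Scheme.Γ.map ι.op) :=
  stmt_19_general k Y Z sY ι hcover
end
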